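/- arXiv:2509.17139 — 4 statements merged into one kernel-verified Lean document; each statement's English description precedes it below -/
import Mathlib

section
/- Let R ⊆ k[[t]] be a k-subalgebra with maximal ideal 𝔪 = R ∩ t·k[[t]] and t^c·k[[t]] ⊆ R. Then the Herzog–Kunz set v(𝔪)\v(𝔪²) is contained in the set of minimal generators of the value semigroup V(R), i.e., every a ∈ v(𝔪)\v(𝔪²) cannot be written as a sum of two nonzero elements of V(R). -/
open PowerSeries

/-- The maximal ideal `𝔪 = R ∩ t·k[[t]]` of a subalgebra `R ⊆ k[[t]]`, i.e. the
elements of `R` with zero constant coefficient (equivalently, positive order). -/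
noncomputable def mIdeal {k : Type*} [Field k] (R : Subalgebra k (PowerSeries k)) : Ideal R :=
  RingHom.ker ((constantCoeff : PowerSeries k →+* k).comp R.subtype)

/-- The set of valuations `v(I)` of the nonzero elements of an ideal `I ⊆ R ⊆ k[[t]]`.
(Note `f.order = n` with `n : ℕ` forces `f ≠ 0`, since the zero series has order `⊤`.) -/
def vset {k : Type*} [Field k] {R : Subalgebra k (PowerSeries k)} (I : Ideal R) : Set ℕ :=
  {n | ∃ f ∈ I, (f : PowerSeries k).order = (n : ℕ∞)}

/-- The value semigroup of `R`. -/
def valueSet {k : Type*} [Field k] (R : Subalgebra k (PowerSeries k)) : Set ℕ :=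
  {n | ∃ f ∈ R, f.order = (n : ℕ∞)}

section

variable {k : Type*} [Field k] {R : Subalgebra k (PowerSeries k)}

theorem mem_mIdeal_iff_order_ne_zero {f : R} :
    f ∈ mIdeal R ↔ (f : PowerSeries k).order ≠ 0 :=
  order_ne_zero_iff_constCoeff_eq_zero.symm

theorem vset_subset_valueSet (I : Ideal R) : vset I ⊆ valueSet R :=
  fun _ ⟨f, _, hf⟩ ↦ ⟨f, f.2, hf⟩

theorem add_mem_vset_mIdeal_sq {u u' : ℕ} (hu : u ∈ valueSet R) (hu' : u' ∈ valueSet R)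
    (hu0 : u ≠ 0) (hu'0 : u' ≠ 0) : u + u' ∈ vset (mIdeal R ^ 2) := by
  obtain ⟨g, hgR, hg⟩ := hu
  obtain ⟨g', hg'R, hg'⟩ := hu'
  have hgm : (⟨g, hgR⟩ : R) ∈ mIdeal R :=
    mem_mIdeal_iff_order_ne_zero.2 (by simpa [hg] using hu0)
  have hg'm : (⟨g', hg'R⟩ : R) ∈ mIdeal R :=
    mem_mIdeal_iff_order_ne_zero.2 (by simpa [hg'] using hu'0)
  refine ⟨⟨g, hgR⟩ * ⟨g', hg'R⟩, sq (mIdeal R) ▸ Ideal.mul_mem_mul hgm hg'm, ?_⟩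
  change (g * g').order = _
  rw [order_mul, hg, hg', Nat.cast_add]

end

theorem herzogKunz_subset_minGens_general {k : Type*} [Field k]
    (R : Subalgebra k (PowerSeries k)) :
    ∀ a ∈ vset (mIdeal R) \ vset ((mIdeal R) ^ 2),
      a ∈ valueSet R ∧
      ¬ ∃ u u', u ∈ valueSet R ∧ u' ∈ valueSet R ∧ u ≠ 0 ∧ u' ≠ 0 ∧ u + u' = a := by
  rintro a ⟨ha, ha2⟩
  refine ⟨vset_subset_valueSet _ ha, ?_⟩
  rintro ⟨u, u', hu, hu', hu0, hu'0, rfl⟩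
  exact ha2 (add_mem_vset_mIdeal_sq hu hu' hu0 hu'0)

/-- every element of the Herzog–Kunz set `v(𝔪)\v(𝔪²)` is a minimal generator
of the value semigroup `V(R)`: it lies in `V(R)` and is not a sum of two nonzero elements
of `V(R)`. -/
theorem herzogKunz_subset_minGens {k : Type*} [Field k]
    (R : Subalgebra k (PowerSeries k)) (c : ℕ) (hc1 : 1 ≤ c)
    (hcond : ∀ f : PowerSeries k, (X : PowerSeries k) ^ c * f ∈ R) :
    ∀ a ∈ vset (mIdeal R) \ vset ((mIdeal R) ^ 2),
      a ∈ valueSet R ∧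
      ¬ ∃ u u', u ∈ valueSet R ∧ u' ∈ valueSet R ∧ u ≠ 0 ∧ u' ≠ 0 ∧ u + u' = a :=
  herzogKunz_subset_minGens_general R
end

section
/- Let R ⊆ k[[t]] be a k-subalgebra with 𝔪 = R ∩ t·k[[t]], conductor ideal 𝔠 = t^{c_R}·k[[t]] ⊆ R where c_R is minimal with this property, and let a_n = max(v(𝔪)\v(𝔪²)). Then 𝔠 ⊄ 𝔪² if and only if a_n ≥ c_R. -/
open PowerSeries

/-!
If `c ≤ aₙ`, then `t^{aₙ}` lies in the conductor but its order `aₙ` is not an order of `𝔪²`.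
If `aₙ < c`, every order `n ≥ c` of an element of `𝔪` is also an order of `𝔪²`, so the leading
term of an element of order `≥ c` can be cancelled by an element of `𝔪²`; repeating this pushes
the order up to `2c`, and `t^{2c}·k[[t]] = 𝔠·𝔠 ⊆ 𝔪²`.
-/

section

variable {k : Type*} [Field k]

theorem PowerSeries.succ_le_order_sub_smul {f g : PowerSeries k} {n : ℕ}
    (hf : (n : ℕ∞) ≤ f.order) (hg : g.order = n) :
    ((n + 1 : ℕ) : ℕ∞) ≤ (f - (coeff n f / coeff n g) • g).order := by
  obtain ⟨hgn, hg_lt⟩ := order_eq_nat.mp hg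
  refine nat_le_order _ _ fun i hi => ?_
  rcases (Nat.lt_succ_iff.mp hi).lt_or_eq with hi | rfl
  · simp [coeff_of_lt_order i (hf.trans_lt' (by exact_mod_cast hi)), hg_lt i hi]
  · simp [div_mul_cancel₀ _ hgn]

theorem PowerSeries.le_order_X_pow_mul (c : ℕ) (f : PowerSeries k) :
    (c : ℕ∞) ≤ ((X : PowerSeries k) ^ c * f).order := by
  simpa [order_X_pow] using le_self_add.trans (le_order_mul ((X : PowerSeries k) ^ c) f)

variable {R : Subalgebra k (PowerSeries k)}

theorem mem_mIdeal_of_one_le_order {r : R} (hr : 1 ≤ (r : PowerSeries k).order) :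
    r ∈ mIdeal R := by
  simpa [mIdeal, RingHom.mem_ker] using one_le_order_iff_constCoeff_eq_zero.mp hr

theorem mem_mIdeal_sq_of_two_mul_le_order {c : ℕ} (hc : c ≠ 0)
    (hcond : ∀ f : PowerSeries k, (X : PowerSeries k) ^ c * f ∈ R) {r : R}
    (hr : ((2 * c : ℕ) : ℕ∞) ≤ (r : PowerSeries k).order) : r ∈ mIdeal R ^ 2 := by
  obtain ⟨u, hu⟩ : (X : PowerSeries k) ^ (2 * c) ∣ r :=
    pow_dvd_iff_le_emultiplicity.mpr (order_eq_emultiplicity_X (r : PowerSeries k) ▸ hr)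
  have hmem (f : PowerSeries k) : (⟨X ^ c * f, hcond f⟩ : R) ∈ mIdeal R :=
    mem_mIdeal_of_one_le_order <|
      (mod_cast Nat.one_le_iff_ne_zero.mpr hc : (1 : ℕ∞) ≤ c).trans (le_order_X_pow_mul c f)
  have hr_eq : r = ⟨X ^ c * 1, hcond 1⟩ * ⟨X ^ c * u, hcond u⟩ :=
    Subtype.ext (by rw [hu, two_mul, pow_add]; simp [mul_assoc])
  rw [hr_eq, sq]
  exact Ideal.mul_mem_mul (hmem 1) (hmem u)

theorem mem_mIdeal_sq_of_le_order {c : ℕ} (hc : c ≠ 0)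
    (hcond : ∀ f : PowerSeries k, (X : PowerSeries k) ^ c * f ∈ R)
    (hvset : ∀ n, c ≤ n → n ∈ vset (mIdeal R) → n ∈ vset (mIdeal R ^ 2))
    {r : R} (hr : (c : ℕ∞) ≤ (r : PowerSeries k).order) : r ∈ mIdeal R ^ 2 := by
  refine Nat.decreasingInduction'
    (P := fun m => ∀ r : R, (m : ℕ∞) ≤ (r : PowerSeries k).order → r ∈ mIdeal R ^ 2)
    ?_ (by omega : c ≤ 2 * c) (fun r hr => mem_mIdeal_sq_of_two_mul_le_order hc hcond hr) r hr
  intro m _ hcm ih s hs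
  rcases hs.lt_or_eq with hlt | heq
  · exact ih s (Order.add_one_le_of_lt hlt)
  · have hs_mem : s ∈ mIdeal R := mem_mIdeal_of_one_le_order <|
      (mod_cast (Nat.one_le_iff_ne_zero.mpr hc).trans hcm : (1 : ℕ∞) ≤ m).trans hs
    obtain ⟨h, hh, hho⟩ := hvset m hcm ⟨s, hs_mem, heq.symm⟩
    set μ := coeff m (s : PowerSeries k) / coeff m (h : PowerSeries k)
    have hμh : μ • h ∈ mIdeal R ^ 2 := Submodule.smul_of_tower_mem _ μ hh
    rw [← sub_add_cancel s (μ • h)]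
    exact add_mem (ih _ (by simpa using succ_le_order_sub_smul hs hho)) hμh

end

theorem conductor_not_subset_sq_iff_general {k : Type*} [Field k]
    (R : Subalgebra k (PowerSeries k)) (c : ℕ)
    (hcond : ∀ f : PowerSeries k, (X : PowerSeries k) ^ c * f ∈ R)
    (aₙ : ℕ) (han : IsGreatest (vset (mIdeal R) \ vset ((mIdeal R) ^ 2)) aₙ) :
    (¬ ∀ f : PowerSeries k,
        (⟨(X : PowerSeries k) ^ c * f, hcond f⟩ : R) ∈ (mIdeal R) ^ 2) ↔ c ≤ aₙ := by
  constructor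
  · intro hnot
    by_contra! hlt
    have hvset (n : ℕ) (hcn : c ≤ n) (hn : n ∈ vset (mIdeal R)) : n ∈ vset (mIdeal R ^ 2) :=
      by_contra fun h => (han.2 ⟨hn, h⟩).not_gt (hlt.trans_le hcn)
    exact hnot fun f => mem_mIdeal_sq_of_le_order (by omega) hcond hvset (le_order_X_pow_mul c f)
  · intro hca hall
    refine han.1.2 ⟨_, hall (X ^ (aₙ - c)), ?_⟩
    show ((X : PowerSeries k) ^ c * X ^ (aₙ - c)).order = (aₙ : ℕ∞)
    rw [← pow_add, Nat.add_sub_cancel' hca, order_X_pow]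

/-- with `c_R` the conductor degree (least `c` with `t^c·k[[t]] ⊆ R`) and
`a_n = max(v(𝔪)\v(𝔪²))`, the conductor ideal `𝔠 = t^{c_R}·k[[t]]` is *not* contained in
`𝔪²` if and only if `a_n ≥ c_R`. -/
theorem conductor_not_subset_sq_iff {k : Type*} [Field k]
    (R : Subalgebra k (PowerSeries k)) (c : ℕ) (hc1 : 1 ≤ c)
    (hcond : ∀ f : PowerSeries k, (X : PowerSeries k) ^ c * f ∈ R)
    (hleast : ∀ c' : ℕ, (∀ f : PowerSeries k, (X : PowerSeries k) ^ c' * f ∈ R) → c ≤ c')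
    (aₙ : ℕ) (han : IsGreatest (vset (mIdeal R) \ vset ((mIdeal R) ^ 2)) aₙ) :
    (¬ ∀ f : PowerSeries k,
        (⟨(X : PowerSeries k) ^ c * f, hcond f⟩ : R) ∈ (mIdeal R) ^ 2) ↔ c ≤ aₙ :=
  conductor_not_subset_sq_iff_general R c hcond aₙ han
end

section
/- Let R ⊆ k[[t]] be a k-subalgebra with 𝔪 = R ∩ t·k[[t]], t^{c_R}·k[[t]] ⊆ R, Herzog–Kunz set {a₁ < … < a_n} = v(𝔪)\v(𝔪²), and Herzog–Kunz generators x₁,…,x_n (so v(xᵢ) = aᵢ). Let T_i = k[[x₁,…,x_i]] be the closed subalgebra generated by x₁,…,x_i. Then for each 1 ≤ i < n, a_{i+1} = min(V(R) \ V(T_i)). -/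
open PowerSeries

/-! An element of `k[x₁,…,xᵢ]` is `c + ℓ + q` with `ℓ` in the `k`-span of the `xⱼ` and `q ∈ 𝔪²`.
Since the `xⱼ` have distinct orders, a nonzero `ℓ` has order some `aⱼ` with `j ≤ i`; as `v(𝔪²)`
contains no `aⱼ`, comparing orders in `q = p - ℓ` shows that no such `p` has order `a_{i+1}`, and
neither has any element of the closure `T_i`.

Conversely, `T_i` approximates every `f ∈ R` to order `a_{i+1}`, one order at a time: a value
`d < a_{i+1}` of `R` is `0`, or some `aⱼ` with `j ≤ i`, or a value of `𝔪²`; in the last case the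
approximations of the factors of a product `gh ∈ 𝔪²` to order `d` give one of `gh` to order
`d + 1`, since both factors have positive order. Hence every value `w < a_{i+1}` of `R` is a value
of `T_i`. -/

namespace PowerSeries

theorem order_eq_of_lt_order_sub {R : Type*} [Ring R] {f g : R⟦X⟧}
    (h : f.order < (f - g).order) : g.order = f.order := by
  have hne : f.order ≠ (-(f - g)).order := by rw [order_neg]; exact h.ne
  rw [show g = f + -(f - g) by abel, order_add_of_order_ne _ _ hne, order_neg]
  exact min_eq_left h.le

variable {k : Type*} [Field k]

theorem order_smul_of_ne_zero {α : k} (hα : α ≠ 0) (f : k⟦X⟧) : (α • f).order = f.order :=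
  le_antisymm (by simpa [smul_smul, hα] using le_order_smul (a := α⁻¹) (φ := α • f))
    le_order_smul

theorem exists_lt_order_sub_smul {f z : k⟦X⟧} {d : ℕ} (hf : (d : ℕ∞) ≤ f.order)
    (hz : z.order = d) : ∃ α : k, (d : ℕ∞) < (f - α • z).order := by
  obtain ⟨hzd, hz_lt⟩ := order_eq_nat.mp hz
  refine ⟨coeff d f / coeff d z, lt_of_lt_of_le (Nat.cast_lt.mpr d.lt_succ_self) ?_⟩
  refine nat_le_order _ _ fun m hm => ?_
  rcases Nat.lt_succ_iff_lt_or_eq.mp hm with hmd | rfl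
  · rw [map_sub, map_smul, hz_lt m hmd, smul_zero, sub_zero]
    exact coeff_of_lt_order m (lt_of_lt_of_le (by exact_mod_cast hmd) hf)
  · rw [map_sub, map_smul, smul_eq_mul, div_mul_cancel₀ _ hzd, sub_self]

theorem exists_order_eq_of_mem_span {s : Set k⟦X⟧} (hs : s.InjOn order) {f : k⟦X⟧}
    (hf : f ∈ Submodule.span k s) (hf0 : f ≠ 0) : ∃ y ∈ s, f.order = y.order := by
  classical
  obtain ⟨t, hts, hft⟩ := Submodule.mem_span_finite_of_mem_span hf
  suffices ∃ y ∈ t, f.order = y.order by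
    obtain ⟨y, hyt, hy⟩ := this
    exact ⟨y, hts hyt, hy⟩
  clear hf
  induction t using Finset.induction_on generalizing f with
  | empty => simp_all
  | insert y t hyt ih =>
    have hts' : (t : Set k⟦X⟧) ⊆ s := fun z hz => hts (Finset.mem_insert_of_mem hz)
    rw [Finset.coe_insert, Submodule.mem_span_insert] at hft
    obtain ⟨α, z, hz, rfl⟩ := hft
    by_cases hα : α = 0
    · simp only [hα, zero_smul, zero_add] at hf0 ⊢
      obtain ⟨y', hy't, hzy'⟩ := ih hf0 hts' hz
      exact ⟨y', Finset.mem_insert_of_mem hy't, hzy'⟩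
    by_cases hz0 : z = 0
    · exact ⟨y, Finset.mem_insert_self y t, by rw [hz0, add_zero, order_smul_of_ne_zero hα]⟩
    obtain ⟨y', hy't, hzy'⟩ := ih hz0 hts' hz
    have hne : (α • y).order ≠ z.order := by
      rw [order_smul_of_ne_zero hα, hzy']
      exact fun h => hyt (hs (hts (Finset.mem_insert_self y t)) (hts' hy't) h ▸ hy't)
    rw [order_add_of_order_ne _ _ hne, order_smul_of_ne_zero hα, hzy']
    rcases min_choice y.order y'.order with h | h
    · exact ⟨y, Finset.mem_insert_self y t, h⟩
    · exact ⟨y', Finset.mem_insert_of_mem hy't, h⟩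

theorem lt_order_add {R : Type*} [Semiring R] {f g : R⟦X⟧} {d : ℕ∞} (hf : d < f.order)
    (hg : d < g.order) : d < (f + g).order :=
  lt_of_lt_of_le (lt_min hf hg) (min_order_le_order_add f g)

def adicClosure (A : Subalgebra k k⟦X⟧) : Subalgebra k k⟦X⟧ where
  carrier := {g | ∀ d : ℕ, ∃ p ∈ A, (d : ℕ∞) < (g - p).order}
  mul_mem' {g₁ g₂} h₁ h₂ d := by
    obtain ⟨p₁, hp₁, ho₁⟩ := h₁ d
    obtain ⟨p₂, hp₂, ho₂⟩ := h₂ d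
    refine ⟨p₁ * p₂, mul_mem hp₁ hp₂, ?_⟩
    rw [show g₁ * g₂ - p₁ * p₂ = (g₁ - p₁) * g₂ + p₁ * (g₂ - p₂) by ring]
    exact lt_order_add (ho₁.trans_le (le_self_add.trans (le_order_mul _ _)))
      (ho₂.trans_le (le_add_self.trans (le_order_mul _ _)))
  add_mem' {g₁ g₂} h₁ h₂ d := by
    obtain ⟨p₁, hp₁, ho₁⟩ := h₁ d
    obtain ⟨p₂, hp₂, ho₂⟩ := h₂ d
    refine ⟨p₁ + p₂, add_mem hp₁ hp₂, ?_⟩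
    rw [show g₁ + g₂ - (p₁ + p₂) = (g₁ - p₁) + (g₂ - p₂) by ring]
    exact lt_order_add ho₁ ho₂
  algebraMap_mem' r d := ⟨algebraMap k k⟦X⟧ r, A.algebraMap_mem r, by simp⟩

theorem le_adicClosure (A : Subalgebra k k⟦X⟧) : A ≤ adicClosure A :=
  fun p hp _ => ⟨p, hp, by simp⟩

/-- The paper's `k[[s]]`. -/
noncomputable def adicAdjoin (s : Set k⟦X⟧) : Subalgebra k k⟦X⟧ :=
  adicClosure (Algebra.adjoin k s)

theorem adicClosure_le_of_X_pow_mul_mem {A R : Subalgebra k k⟦X⟧} (hAR : A ≤ R) {c : ℕ}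
    (hc : ∀ f : k⟦X⟧, X ^ c * f ∈ R) : adicClosure A ≤ R := by
  intro g hg
  obtain ⟨p, hp, hgp⟩ := hg c
  obtain ⟨h, hh⟩ : X ^ c ∣ g - p :=
    X_pow_dvd_iff.mpr fun m hm => coeff_of_lt_order m ((Nat.cast_lt.mpr hm).trans hgp)
  rw [show g = p + X ^ c * h by rw [← hh]; ring]
  exact add_mem (hAR hp) (hc h)

theorem order_ne_of_mem_adicClosure {A : Subalgebra k k⟦X⟧} {w : ℕ}
    (hA : ∀ p ∈ A, p.order ≠ w) {g : k⟦X⟧} (hg : g ∈ adicClosure A) : g.order ≠ w := by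
  intro hgw
  obtain ⟨p, hp, hgp⟩ := hg w
  exact hA p hp (order_eq_of_lt_order_sub (hgw ▸ hgp) ▸ hgw)

theorem exists_succ_le_order_sub {R T : Subalgebra k k⟦X⟧} (hTR : T ≤ R) {d : ℕ}
    (happrox : ∀ f ∈ R, ∃ g ∈ T, (d : ℕ∞) ≤ (f - g).order)
    (hval : ∀ f ∈ R, f.order = d → ∃ z ∈ T, z.order = d) :
    ∀ f ∈ R, ∃ g ∈ T, ((d + 1 : ℕ) : ℕ∞) ≤ (f - g).order := by
  intro f hf
  obtain ⟨g₀, hg₀, hd⟩ := happrox f hf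
  rw [Nat.cast_succ]
  rcases hd.lt_or_eq with hlt | heq
  · exact ⟨g₀, hg₀, Order.add_one_le_of_lt hlt⟩
  obtain ⟨z, hz, hzd⟩ := hval (f - g₀) (sub_mem hf (hTR hg₀)) heq.symm
  obtain ⟨α, hα⟩ := exists_lt_order_sub_smul hd hzd
  refine ⟨g₀ + α • z, add_mem hg₀ (T.smul_mem hz α), Order.add_one_le_of_lt ?_⟩
  rwa [← sub_sub]

end PowerSeries

theorem Algebra.exists_eq_algebraMap_add_add_of_mem_adjoin {k A : Type*} [CommSemiring k]
    [CommSemiring A] [Algebra k A] {I : Ideal A} {s : Set A} (hs : s ⊆ I) {p : A}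
    (hp : p ∈ Algebra.adjoin k s) :
    ∃ c : k, ∃ ℓ ∈ Submodule.span k s, ∃ q ∈ I ^ 2, p = algebraMap k A c + ℓ + q := by
  have hspan : ∀ ℓ ∈ Submodule.span k s, ℓ ∈ I := fun ℓ hℓ =>
    (Submodule.span_le (p := I.restrictScalars k)).mpr hs hℓ
  induction hp using Algebra.adjoin_induction with
  | mem y hy => exact ⟨0, y, Submodule.subset_span hy, 0, zero_mem _, by simp⟩
  | algebraMap r => exact ⟨r, 0, zero_mem _, 0, zero_mem _, by simp⟩
  | add p₁ p₂ _ _ ih₁ ih₂ =>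
    obtain ⟨c₁, ℓ₁, hℓ₁, q₁, hq₁, rfl⟩ := ih₁
    obtain ⟨c₂, ℓ₂, hℓ₂, q₂, hq₂, rfl⟩ := ih₂
    exact ⟨c₁ + c₂, ℓ₁ + ℓ₂, add_mem hℓ₁ hℓ₂, q₁ + q₂, add_mem hq₁ hq₂, by
      rw [map_add]; ring⟩
  | mul p₁ p₂ _ _ ih₁ ih₂ =>
    obtain ⟨c₁, ℓ₁, hℓ₁, q₁, hq₁, rfl⟩ := ih₁
    obtain ⟨c₂, ℓ₂, hℓ₂, q₂, hq₂, rfl⟩ := ih₂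
    refine ⟨c₁ * c₂, c₁ • ℓ₂ + c₂ • ℓ₁,
      add_mem (Submodule.smul_mem _ _ hℓ₂) (Submodule.smul_mem _ _ hℓ₁),
      (algebraMap k A c₁ + ℓ₁ + q₁) * q₂ + q₁ * (algebraMap k A c₂ + ℓ₂) + ℓ₁ * ℓ₂, ?_, ?_⟩
    · refine add_mem (add_mem ((I ^ 2).mul_mem_left _ hq₂) ((I ^ 2).mul_mem_right _ hq₁)) ?_
      rw [sq]
      exact Ideal.mul_mem_mul (hspan _ hℓ₁) (hspan _ hℓ₂)
    · rw [map_mul, Algebra.smul_def, Algebra.smul_def]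
      ring

section HerzogKunz

variable {k : Type*} [Field k] {R : Subalgebra k k⟦X⟧}

theorem mem_mIdeal_iff_one_le_order {f : R} : f ∈ mIdeal R ↔ 1 ≤ (f : k⟦X⟧).order := by
  simp [mIdeal, RingHom.mem_ker, one_le_order_iff_constCoeff_eq_zero]

theorem exists_lt_order_sub_of_mem_mIdeal_sq {T : Subalgebra k k⟦X⟧} {d : ℕ} (hd : 1 ≤ d)
    (happrox : ∀ f ∈ R, ∃ g ∈ T, (d : ℕ∞) ≤ (f - g).order) {F : R} (hF : F ∈ mIdeal R ^ 2) :
    ∃ y ∈ T, (d : ℕ∞) < ((F : k⟦X⟧) - y).order := by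
  rw [sq] at hF
  induction hF using Submodule.mul_induction_on' with
  | mem_mul_mem g hg h hh =>
    obtain ⟨G, hG, hgG⟩ := happrox g g.2
    obtain ⟨H, hH, hhH⟩ := happrox h h.2
    have hG1 : 1 ≤ G.order := by
      have := min_order_le_order_add (g : k⟦X⟧) (-(g - G))
      rw [order_neg, show (g : k⟦X⟧) + -(g - G) = G by abel] at this
      exact (le_min (mem_mIdeal_iff_one_le_order.mp hg) ((Nat.one_le_cast.mpr hd).trans hgG)).trans
        this
    refine ⟨G * H, mul_mem hG hH, ?_⟩
    rw [show ((g * h : R) : k⟦X⟧) - G * H = (g - G) * h + G * (h - H) by push_cast; ring]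
    have hd1 : (d : ℕ∞) < d + 1 := by exact_mod_cast d.lt_succ_self
    refine lt_order_add ?_ ?_
    · calc (d : ℕ∞) < d + 1 := hd1
        _ ≤ ((g : k⟦X⟧) - G).order + (h : k⟦X⟧).order :=
          add_le_add hgG (mem_mIdeal_iff_one_le_order.mp hh)
        _ ≤ _ := le_order_mul _ _
    · calc (d : ℕ∞) < 1 + d := add_comm (d : ℕ∞) 1 ▸ hd1
        _ ≤ G.order + ((h : k⟦X⟧) - H).order := add_le_add hG1 hhH
        _ ≤ _ := le_order_mul _ _
  | add F₁ _ F₂ _ ih₁ ih₂ =>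
    obtain ⟨y₁, hy₁, h₁⟩ := ih₁
    obtain ⟨y₂, hy₂, h₂⟩ := ih₂
    refine ⟨y₁ + y₂, add_mem hy₁ hy₂, ?_⟩
    rw [show ((F₁ + F₂ : R) : k⟦X⟧) - (y₁ + y₂) = (F₁ - y₁) + (F₂ - y₂) by push_cast; ring]
    exact lt_order_add h₁ h₂

variable {n : ℕ} {a : Fin n → ℕ} {x : Fin n → R}

theorem order_ne_of_mem_adjoin (ha : Function.Injective a) (hxm : ∀ j, x j ∈ mIdeal R)
    (hxv : ∀ j, (x j : k⟦X⟧).order = a j) (hsq : ∀ j, a j ∉ vset (mIdeal R ^ 2))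
    {J : Set (Fin n)} {m : Fin n} (hm : m ∉ J) {p : k⟦X⟧}
    (hp : p ∈ Algebra.adjoin k ((fun j => (x j : k⟦X⟧)) '' J)) : p.order ≠ a m := by
  intro hpm
  have hxJ : (fun j => (x j : k⟦X⟧)) '' J = R.val '' (x '' J) := (Set.image_image _ _ _).symm
  rw [hxJ, Algebra.adjoin_image] at hp
  obtain ⟨p, hp, rfl⟩ := hp
  have hs : x '' J ⊆ mIdeal R := by rintro _ ⟨j, -, rfl⟩; exact hxm j
  obtain ⟨c, ℓ, hℓ, q, hq, rfl⟩ := Algebra.exists_eq_algebraMap_add_add_of_mem_adjoin hs hp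
  have hℓ𝔪 : ℓ ∈ mIdeal R := (Submodule.span_le (p := (mIdeal R).restrictScalars k)).mpr hs hℓ
  have hq𝔪 : q ∈ mIdeal R := Ideal.pow_le_self two_ne_zero hq
  obtain rfl : c = 0 := by
    have hp𝔪 : algebraMap k R c + ℓ + q ∈ mIdeal R :=
      mem_mIdeal_iff_one_le_order.mpr (hpm ▸ hxv m ▸ mem_mIdeal_iff_one_le_order.mp (hxm m))
    have : algebraMap k R c ∈ mIdeal R := by
      simpa using sub_mem (sub_mem hp𝔪 hq𝔪) hℓ𝔪
    simpa [mIdeal, RingHom.mem_ker] using this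
  replace hpm : ((ℓ : k⟦X⟧) + q).order = a m := by simpa using hpm
  obtain ⟨j', hqj'⟩ : ∃ j', (q : k⟦X⟧).order = a j' := by
    by_cases hℓ0 : (ℓ : k⟦X⟧) = 0
    · exact ⟨m, by simpa [hℓ0] using hpm⟩
    have hinj : Set.InjOn order ((fun j => (x j : k⟦X⟧)) '' J) :=
      Set.InjOn.image_of_comp fun j₁ _ j₂ _ h => ha (by simpa [hxv] using h)
    have hℓspan : (ℓ : k⟦X⟧) ∈ Submodule.span k ((fun j => (x j : k⟦X⟧)) '' J) :=
      hxJ ▸ Submodule.apply_mem_span_image_of_mem_span R.val.toLinearMap hℓ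
    obtain ⟨_, ⟨j, hj, rfl⟩, hℓj⟩ := exists_order_eq_of_mem_span hinj hℓspan hℓ0
    rw [hxv] at hℓj
    have hne : ((ℓ : k⟦X⟧) + q).order ≠ (-(ℓ : k⟦X⟧)).order := by
      rw [order_neg, hpm, hℓj, Ne, Nat.cast_inj]
      exact fun h => hm (ha h ▸ hj)
    have hsum := order_add_of_order_ne _ _ hne
    rw [add_neg_cancel_comm, order_neg, hpm, hℓj] at hsum
    rcases min_choice (a m : ℕ∞) (a j) with h | h
    · exact ⟨m, hsum.trans h⟩
    · exact ⟨j, hsum.trans h⟩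
  exact hsq j' ⟨q, hq, hqj'⟩

theorem exists_mem_adicAdjoin_order_eq (hxv : ∀ j, (x j : k⟦X⟧).order = a j)
    (hcover : vset (mIdeal R) ⊆ vset (mIdeal R ^ 2) ∪ Set.range a) {J : Set (Fin n)}
    {m : Fin n} (hJ : ∀ j, a j < a m → j ∈ J) {d : ℕ} (hdm : d < a m)
    (happrox : ∀ f ∈ R, ∃ g ∈ adicAdjoin ((fun j => (x j : k⟦X⟧)) '' J),
      (d : ℕ∞) ≤ (f - g).order)
    {f : k⟦X⟧} (hf : f ∈ R) (hfd : f.order = d) :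
    ∃ z ∈ adicAdjoin ((fun j => (x j : k⟦X⟧)) '' J), z.order = d := by
  rcases Nat.eq_zero_or_pos d with rfl | hd
  · exact ⟨1, one_mem _, order_one⟩
  have hf𝔪 : ⟨f, hf⟩ ∈ mIdeal R :=
    mem_mIdeal_iff_one_le_order.mpr (hfd ▸ Nat.one_le_cast.mpr hd)
  rcases hcover ⟨⟨f, hf⟩, hf𝔪, hfd⟩ with ⟨F, hF, hFd⟩ | ⟨j, rfl⟩
  · obtain ⟨y, hy, hFy⟩ := exists_lt_order_sub_of_mem_mIdeal_sq hd happrox hF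
    exact ⟨y, hy, hFd ▸ order_eq_of_lt_order_sub (hFd ▸ hFy)⟩
  · exact ⟨x j, le_adicClosure _ (Algebra.subset_adjoin ⟨j, hJ j hdm, rfl⟩), hxv j⟩

theorem exists_le_order_sub_mem_adicAdjoin {c : ℕ} (hc : ∀ f : k⟦X⟧, X ^ c * f ∈ R)
    (hxv : ∀ j, (x j : k⟦X⟧).order = a j)
    (hcover : vset (mIdeal R) ⊆ vset (mIdeal R ^ 2) ∪ Set.range a) {J : Set (Fin n)}
    {m : Fin n} (hJ : ∀ j, a j < a m → j ∈ J) {d : ℕ} (hdm : d ≤ a m) :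
    ∀ f ∈ R, ∃ g ∈ adicAdjoin ((fun j => (x j : k⟦X⟧)) '' J),
      (d : ℕ∞) ≤ (f - g).order := by
  have hTR : adicAdjoin ((fun j => (x j : k⟦X⟧)) '' J) ≤ R :=
    adicClosure_le_of_X_pow_mul_mem
      (Algebra.adjoin_le (by rintro _ ⟨j, -, rfl⟩; exact (x j).2)) hc
  induction d with
  | zero => exact fun f _ => ⟨0, zero_mem _, by simp⟩
  | succ d ih =>
    have happrox := ih (by omega)
    exact exists_succ_le_order_sub hTR happrox
      fun f hf hfd => exists_mem_adicAdjoin_order_eq hxv hcover hJ (by omega) happrox hf hfd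

theorem isLeast_herzogKunz_value {c : ℕ} (hc : ∀ f : k⟦X⟧, X ^ c * f ∈ R)
    (ha : Function.Injective a) (hS : vset (mIdeal R) \ vset (mIdeal R ^ 2) = Set.range a)
    (hxm : ∀ j, x j ∈ mIdeal R) (hxv : ∀ j, (x j : k⟦X⟧).order = a j) {J : Set (Fin n)}
    {m : Fin n} (hJ : ∀ j, j ∈ J ↔ a j < a m) :
    IsLeast {w : ℕ | (∃ f ∈ R, f.order = (w : ℕ∞)) ∧
      ¬ ∃ g ∈ adicAdjoin ((fun j => (x j : k⟦X⟧)) '' J), g.order = (w : ℕ∞)}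
      (a m) := by
  have hsq : ∀ j, a j ∉ vset (mIdeal R ^ 2) := fun j h =>
    (hS.symm ▸ Set.mem_range_self j : a j ∈ vset (mIdeal R) \ _).2 h
  have hcover := Set.sdiff_subset_iff.mp hS.subset
  refine ⟨⟨⟨x m, (x m).2, hxv m⟩, fun ⟨g, hg, hgm⟩ => ?_⟩, fun w ⟨⟨f, hf, hfw⟩, hw⟩ => ?_⟩
  · exact order_ne_of_mem_adicClosure
      (fun p hp => order_ne_of_mem_adjoin ha hxm hxv hsq (fun h => ((hJ m).mp h).false) hp)
      hg hgm
  · by_contra! hwm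
    obtain ⟨g, hg, hfg⟩ := exists_le_order_sub_mem_adicAdjoin hc hxv hcover
      (fun j => (hJ j).mpr) le_rfl f hf
    exact hw ⟨g, hg, hfw ▸ order_eq_of_lt_order_sub (hfw ▸ (Nat.cast_lt.mpr hwm).trans_le hfg)⟩

end HerzogKunz

theorem next_herzogKunz_value_eq_min_general {k : Type*} [Field k]
    (R : Subalgebra k (PowerSeries k)) (c : ℕ)
    (hcond : ∀ f : PowerSeries k, (X : PowerSeries k) ^ c * f ∈ R)
    (n : ℕ) (a : Fin n → ℕ) (ha : StrictMono a)
    (hS : vset (mIdeal R) \ vset ((mIdeal R) ^ 2) = Set.range a)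
    (x : Fin n → R) (hxm : ∀ i, x i ∈ mIdeal R)
    (hxv : ∀ i, (x i : PowerSeries k).order = (a i : ℕ∞)) :
    ∀ (i : ℕ) (hi : i + 1 < n) (T : Set (PowerSeries k)),
      (∀ g : PowerSeries k, g ∈ T ↔ ∀ d : ℕ, ∃ p ∈ Algebra.adjoin k
          {y : PowerSeries k | ∃ j : Fin n, j.val ≤ i ∧ y = (x j : PowerSeries k)},
          (d : ℕ∞) < (g - p).order) →
      IsLeast {w : ℕ | (∃ f ∈ R, f.order = (w : ℕ∞)) ∧ ¬ ∃ g ∈ T, g.order = (w : ℕ∞)}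
        (a ⟨i + 1, hi⟩) := by
  intro i hi T hT
  have hgens : {y : PowerSeries k | ∃ j : Fin n, j.val ≤ i ∧ y = (x j : PowerSeries k)} =
      (fun j => (x j : PowerSeries k)) '' {j | j.val ≤ i} := by
    ext
    simp [eq_comm]
  rw [hgens] at hT
  obtain rfl : T = adicAdjoin ((fun j => (x j : k⟦X⟧)) '' {j | j.val ≤ i}) :=
    Set.ext hT
  refine isLeast_herzogKunz_value hcond ha.injective hS hxm hxv fun j => ?_
  rw [ha.lt_iff_lt, Fin.lt_def]
  exact Nat.lt_succ_iff.symm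

/-- with Herzog–Kunz generators `x₁,…,x_n` (`v(xᵢ) = aᵢ`) and
`T_i = k[[x₁,…,x_i]]` (the `t`-adic closure of the `k`-algebra generated by `x₁,…,xᵢ`,
i.e. the image of a power series ring), for each `i < n` one has
`a_{i+1} = min (V(R) \ V(T_i))`. -/
theorem next_herzogKunz_value_eq_min {k : Type*} [Field k]
    (R : Subalgebra k (PowerSeries k)) (c : ℕ) (hc1 : 1 ≤ c)
    (hcond : ∀ f : PowerSeries k, (X : PowerSeries k) ^ c * f ∈ R)
    (n : ℕ) (a : Fin n → ℕ) (ha : StrictMono a)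
    (hS : vset (mIdeal R) \ vset ((mIdeal R) ^ 2) = Set.range a)
    (x : Fin n → R) (hxm : ∀ i, x i ∈ mIdeal R)
    (hxv : ∀ i, (x i : PowerSeries k).order = (a i : ℕ∞)) :
    ∀ (i : ℕ) (hi : i + 1 < n) (T : Set (PowerSeries k)),
      (∀ g : PowerSeries k, g ∈ T ↔ ∀ d : ℕ, ∃ p ∈ Algebra.adjoin k
          {y : PowerSeries k | ∃ j : Fin n, j.val ≤ i ∧ y = (x j : PowerSeries k)},
          (d : ℕ∞) < (g - p).order) →
      IsLeast {w : ℕ | (∃ f ∈ R, f.order = (w : ℕ∞)) ∧ ¬ ∃ g ∈ T, g.order = (w : ℕ∞)}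
        (a ⟨i + 1, hi⟩) :=
  next_herzogKunz_value_eq_min_general R c hcond n a ha hS x hxm hxv
end

section
/- Let R ⊆ k[[t]] be a k-subalgebra with 𝔪 = R ∩ t·k[[t]], t^{c_R}·k[[t]] ⊆ R, and let a_n = max(v(𝔪)\v(𝔪²)). Suppose y₁,…,y_n generate 𝔪 (as an R-ideal), and ỹ₁,…,ỹ_n ∈ R satisfy yᵢ − ỹᵢ ∈ t^{a_n+1}·k[[t]] for all i. Then ỹ₁,…,ỹ_n also generate 𝔪. -/
/-!
Every `1 - u` with `u ∈ 𝔪` is a unit of `R`: its inverse agrees with the truncated geometric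
series `∑_{i<c} uⁱ ∈ R` modulo `t^c`, and `t^c·k[[t]] ⊆ R`. Hence `𝔪` lies in the Jacobson radical
and, by Nakayama, it suffices that `yᵢ - zᵢ ∈ 𝔪²`. An element of `𝔪` divisible by `t^m` with
`m > a_n` lies in `𝔪²` by descending induction on `m`: it is `t^c · t^c h ∈ 𝔪²` once `m ≥ 2c`,
and otherwise either its `t^m`-coefficient vanishes, or `m ∈ v(𝔪²)` by maximality of `a_n` and
subtracting a scalar multiple of an element of `𝔪²` of order `m` kills that coefficient.
-/

open PowerSeries

namespace PowerSeries

variable {k : Type*} [Field k]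

theorem X_pow_succ_dvd_of_coeff_eq_zero {m : ℕ} {f : k⟦X⟧} (hf : X ^ m ∣ f)
    (hm : coeff m f = 0) : X ^ (m + 1) ∣ f := by
  rw [X_pow_dvd_iff] at hf ⊢
  intro i hi
  rcases Nat.lt_succ_iff_lt_or_eq.1 hi with hi | rfl
  exacts [hf i hi, hm]

theorem X_pow_succ_dvd_sub_smul {m : ℕ} {f g : k⟦X⟧} (hf : X ^ m ∣ f) (hg : g.order = m) :
    X ^ (m + 1) ∣ f - (coeff m f / coeff m g) • g := by
  rw [order_eq_nat] at hg
  rw [X_pow_dvd_iff] at hf ⊢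
  intro i hi
  rcases Nat.lt_succ_iff_lt_or_eq.1 hi with hi | rfl
  · simp [hf i hi, hg.2 i hi]
  · simp [div_mul_cancel₀ _ hg.1]

end PowerSeries

namespace Ideal

theorem span_range_eq_of_sub_mem_sq {A ι : Type*} [CommRing A] [Finite ι] {I : Ideal A}
    (hI : I ≤ jacobson ⊥) {y z : ι → A} (hy : span (Set.range y) = I)
    (hyz : ∀ i, y i - z i ∈ I ^ 2) : span (Set.range z) = I := by
  have hyI : ∀ i, y i ∈ I := fun i => hy ▸ subset_span ⟨i, rfl⟩
  refine le_antisymm (span_le.2 ?_) ?_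
  · rintro _ ⟨i, rfl⟩
    simpa using sub_mem (hyI i) (pow_le_self two_ne_zero (hyz i))
  · have hfg : I.FG := hy ▸ Submodule.fg_span (Set.finite_range y)
    refine Submodule.le_of_le_smul_of_le_jacobson_bot hfg hI ?_
    conv_lhs => rw [← hy]
    rw [span_le]
    rintro _ ⟨i, rfl⟩
    rw [← add_sub_cancel (z i) (y i)]
    refine add_mem (Submodule.mem_sup_left (subset_span ⟨i, rfl⟩)) (Submodule.mem_sup_right ?_)
    rw [smul_eq_mul, ← sq]
    exact hyz i

end Ideal

section

variable {k : Type*} [Field k] {R : Subalgebra k k⟦X⟧}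

theorem mem_mIdeal_iff {f : R} : f ∈ mIdeal R ↔ constantCoeff (f : k⟦X⟧) = 0 := by
  simp [mIdeal, RingHom.mem_ker]

theorem mem_of_X_pow_dvd_of_forall_X_pow_succ_dvd {I J : Ideal R} (hJI : J ≤ I) {m : ℕ}
    (hm : m ∈ vset I → m ∈ vset J) (hsucc : ∀ f ∈ I, X ^ (m + 1) ∣ (f : k⟦X⟧) → f ∈ J)
    {f : R} (hf : f ∈ I) (hdvd : X ^ m ∣ (f : k⟦X⟧)) : f ∈ J := by
  by_cases hcoeff : coeff m (f : k⟦X⟧) = 0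
  · exact hsucc f hf (X_pow_succ_dvd_of_coeff_eq_zero hdvd hcoeff)
  obtain ⟨g, hgJ, hg⟩ := hm ⟨f, hf, order_eq_nat.2 ⟨hcoeff, X_pow_dvd_iff.1 hdvd⟩⟩
  set a := coeff m (f : k⟦X⟧) / coeff m (g : k⟦X⟧)
  have hrest : f - a • g ∈ J :=
    hsucc _ (sub_mem hf (I.smul_of_tower_mem a (hJI hgJ)))
      (by simpa using X_pow_succ_dvd_sub_smul hdvd hg)
  simpa using add_mem hrest (J.smul_of_tower_mem a hgJ)

theorem mem_of_X_pow_dvd_of_mem_upperBounds {I J : Ideal R} (hJI : J ≤ I) {a N : ℕ}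
    (ha : a ∈ upperBounds (vset I \ vset J)) (hN : ∀ f ∈ I, X ^ N ∣ (f : k⟦X⟧) → f ∈ J)
    {f : R} (hf : f ∈ I) (hdvd : X ^ (a + 1) ∣ (f : k⟦X⟧)) : f ∈ J := by
  have key : ∀ m, (hm : m ≤ max N (a + 1)) → a < m → ∀ f ∈ I, X ^ m ∣ (f : k⟦X⟧) → f ∈ J := by
    intro m hm
    induction hm using Nat.decreasingInduction with
    | self => exact fun _ f hf hdvd => hN f hf (dvd_trans (pow_dvd_pow _ (le_max_left _ _)) hdvd)
    | of_succ m _ ih =>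
      refine fun ham f hf => mem_of_X_pow_dvd_of_forall_X_pow_succ_dvd hJI (fun hmI => ?_)
        (ih (by omega)) hf
      by_contra hmJ
      exact absurd (ha ⟨hmI, hmJ⟩) (not_le.2 ham)
  exact key (a + 1) (le_max_right _ _) (by omega) f hf hdvd

variable {c : ℕ}

theorem X_pow_mul_mem_mIdeal (hcond : ∀ f : k⟦X⟧, X ^ c * f ∈ R) (hc : c ≠ 0) (g : k⟦X⟧) :
    (⟨X ^ c * g, hcond g⟩ : R) ∈ mIdeal R := by
  simp [mem_mIdeal_iff, hc]

theorem mem_mIdeal_sq_of_X_pow_dvd (hcond : ∀ f : k⟦X⟧, X ^ c * f ∈ R) (hc : c ≠ 0) {f : R}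
    (hf : X ^ (2 * c) ∣ (f : k⟦X⟧)) : f ∈ mIdeal R ^ 2 := by
  obtain ⟨h, hh⟩ := hf
  have hfactor : f = ⟨X ^ c * 1, hcond 1⟩ * ⟨X ^ c * h, hcond h⟩ :=
    Subtype.ext (by rw [hh]; push_cast; ring)
  rw [hfactor, sq]
  exact Ideal.mul_mem_mul (X_pow_mul_mem_mIdeal hcond hc 1) (X_pow_mul_mem_mIdeal hcond hc h)

theorem inv_one_sub_mem (hcond : ∀ f : k⟦X⟧, X ^ c * f ∈ R) {u : k⟦X⟧} (hu : u ∈ R)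
    (hu0 : constantCoeff u = 0) : (1 - u)⁻¹ ∈ R := by
  obtain ⟨h, hh⟩ : X ^ c ∣ u ^ c := pow_dvd_pow_of_dvd (X_dvd_iff.2 hu0) c
  have hinv : (1 - u) * (1 - u)⁻¹ = 1 := PowerSeries.mul_inv_cancel _ (by simp [hu0])
  have hgeom := mul_neg_geom_sum u c
  have hexpand : (1 - u)⁻¹ = ∑ i ∈ Finset.range c, u ^ i + X ^ c * (h * (1 - u)⁻¹) := by
    linear_combination (∑ i ∈ Finset.range c, u ^ i) * hinv - (1 - u)⁻¹ * hgeom + (1 - u)⁻¹ * hh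
  rw [hexpand]
  exact add_mem (sum_mem fun i _ => pow_mem hu i) (hcond _)

theorem isUnit_one_sub_of_mem_mIdeal (hcond : ∀ f : k⟦X⟧, X ^ c * f ∈ R) {f : R}
    (hf : f ∈ mIdeal R) : IsUnit (1 - f) := by
  have hf0 := mem_mIdeal_iff.1 hf
  refine IsUnit.of_mul_eq_one ⟨_, inv_one_sub_mem hcond f.2 hf0⟩ (Subtype.ext ?_)
  simpa using PowerSeries.mul_inv_cancel (1 - (f : k⟦X⟧)) (by simp [hf0])

theorem mIdeal_le_jacobson_bot (hcond : ∀ f : k⟦X⟧, X ^ c * f ∈ R) :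
    mIdeal R ≤ Ideal.jacobson ⊥ := fun x hx => Ideal.mem_jacobson_bot.2 fun y => by
  simpa [sub_eq_add_neg, add_comm] using
    isUnit_one_sub_of_mem_mIdeal hcond (neg_mem (Ideal.mul_mem_right y _ hx))

end

/-- if `y₁,…,y_n` generate `𝔪` and `zᵢ ∈ R` agree with `yᵢ` modulo
`t^{a_n+1}·k[[t]]` (where `a_n = max(v(𝔪)\v(𝔪²))`), then `z₁,…,z_n` also generate `𝔪`. -/
theorem generators_stable_under_high_order_change {k : Type*} [Field k]
    (R : Subalgebra k (PowerSeries k)) (c : ℕ) (hc1 : 1 ≤ c)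
    (hcond : ∀ f : PowerSeries k, (X : PowerSeries k) ^ c * f ∈ R)
    (aₙ : ℕ) (han : IsGreatest (vset (mIdeal R) \ vset ((mIdeal R) ^ 2)) aₙ)
    (n : ℕ) (y : Fin n → R) (hy : Ideal.span (Set.range y) = mIdeal R)
    (z : Fin n → R)
    (hclose : ∀ i, ∃ f : PowerSeries k,
      (y i : PowerSeries k) - (z i : PowerSeries k) = (X : PowerSeries k) ^ (aₙ + 1) * f) :
    Ideal.span (Set.range z) = mIdeal R := by
  have hdiff : ∀ i, y i - z i ∈ mIdeal R ^ 2 := by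
    intro i
    obtain ⟨f, hf⟩ := hclose i
    have hdvd : X ^ (aₙ + 1) ∣ ((y i - z i : R) : PowerSeries k) := ⟨f, by simpa using hf⟩
    have hmem : y i - z i ∈ mIdeal R :=
      mem_mIdeal_iff.2 (X_dvd_iff.1 (dvd_trans (dvd_pow_self X (Nat.succ_ne_zero aₙ)) hdvd))
    exact mem_of_X_pow_dvd_of_mem_upperBounds (Ideal.pow_le_self two_ne_zero) han.2
      (fun f _ => mem_mIdeal_sq_of_X_pow_dvd hcond (by omega)) hmem hdvd
  exact Ideal.span_range_eq_of_sub_mem_sq (mIdeal_le_jacobson_bot hcond) hy hdiff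
end
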